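/- arXiv:2605.25633 — 3 statements merged into one kernel-verified Lean document; each statement's English description precedes it below -/
import Mathlib

section
/- Let {d_i}_{i=1}^n be a martingale difference sequence with respect to a filtration {F_i}, with E[d_i²] < ∞ for all i. Then for every λ ∈ ℝ, E[ exp( λ Σ_{i=1}^n d_i − (λ²/2)( Σ_{i=1}^n d_i² + Σ_{i=1}^n E[d_i² | F_{i−1}] ) ) ] ≤ 1. -/
open MeasureTheory

/-- Key pointwise inequality: `exp(x - x²/2) ≤ 1 + x + x²/2`. -/
lemma exp_sub_sq_le (x : ℝ) : Real.exp (x - x ^ 2 / 2) ≤ 1 + x + x ^ 2 / 2 := by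
  set t := x - x ^ 2 / 2 with ht
  have h1 : 1 - t ≤ Real.exp (-t) := by
    have := Real.add_one_le_exp (-t); linarith
  have h2 : Real.exp t * Real.exp (-t) = 1 := by
    rw [← Real.exp_add]; simp
  have h3 : (0 : ℝ) < Real.exp t := Real.exp_pos _
  have h4 : Real.exp t * (1 - t) ≤ 1 := by
    calc Real.exp t * (1 - t) ≤ Real.exp t * Real.exp (-t) :=
          mul_le_mul_of_nonneg_left h1 h3.le
      _ = 1 := h2
  have h5 : 0 < 1 - t := by rw [ht]; nlinarith [sq_nonneg (x - 1)]
  have h6 : (1 : ℝ) ≤ (1 + x + x ^ 2 / 2) * (1 - t) := by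
    rw [ht]; nlinarith [sq_nonneg (x * x)]
  exact le_of_mul_le_mul_right (h4.trans h6) h5

/-- Pointwise bound: `x - x²/2 ≤ 1/2`. -/
lemma sub_sq_le_half (x : ℝ) : x - x ^ 2 / 2 ≤ 1 / 2 := by nlinarith [sq_nonneg (x - 1)]

/-- The supermartingale process. -/
noncomputable def selfNormZ {Ω : Type*} {m0 : MeasurableSpace Ω} (μ : Measure Ω)
    (ℱ : Filtration ℕ m0) (d : ℕ → Ω → ℝ) (lam : ℝ) (n : ℕ) (ω : Ω) : ℝ :=
  Real.exp (lam * ∑ i ∈ Finset.range n, d (i + 1) ω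
    - lam ^ 2 / 2 * ((∑ i ∈ Finset.range n, (d (i + 1) ω) ^ 2)
      + ∑ i ∈ Finset.range n, (μ[fun ω' => (d (i + 1) ω') ^ 2|ℱ i]) ω))

/-- Self-normalized exponential supermartingale inequality: for a martingale
difference sequence `d₁,…,dₙ` (here `d (i+1)` relative to `ℱ i`) with square-integrable
increments, for all `λ ∈ ℝ`,
`E[exp(λ Σ dᵢ − (λ²/2)(Σ dᵢ² + Σ E[dᵢ²|F_{i−1}]))] ≤ 1`. -/
theorem stmt8 {Ω : Type*} {m0 : MeasurableSpace Ω} (μ : Measure Ω) [IsProbabilityMeasure μ]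
    (ℱ : Filtration ℕ m0) (n : ℕ) (d : ℕ → Ω → ℝ)
    (hadp : ∀ i, StronglyMeasurable[ℱ i] (d i))
    (hint : ∀ i, Integrable (fun ω => (d i ω) ^ 2) μ)
    (hmdf : ∀ i, μ[d (i + 1)|ℱ i] =ᵐ[μ] 0) :
    ∀ lam : ℝ,
      (∫⁻ ω, ENNReal.ofReal (Real.exp (lam * ∑ i ∈ Finset.range n, d (i + 1) ω
        - lam ^ 2 / 2 * ((∑ i ∈ Finset.range n, (d (i + 1) ω) ^ 2)
          + ∑ i ∈ Finset.range n, (μ[fun ω' => (d (i + 1) ω') ^ 2|ℱ i]) ω))) ∂μ) ≤ 1 := by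
  intro lam
  set Z : ℕ → Ω → ℝ := selfNormZ μ ℱ d lam with hZ
  -- measurability of Z m wrt ℱ m
  have hZmeas : ∀ m, StronglyMeasurable[ℱ m] (Z m) := by
    intro m
    have h1 : Measurable[ℱ m] fun ω => ∑ i ∈ Finset.range m, d (i + 1) ω :=
      Finset.measurable_sum _ fun i hi =>
        ((hadp (i + 1)).mono (ℱ.mono (Finset.mem_range.mp hi))).measurable
    have h2 : Measurable[ℱ m] fun ω => ∑ i ∈ Finset.range m, (d (i + 1) ω) ^ 2 :=
      Finset.measurable_sum _ fun i hi =>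
        (((hadp (i + 1)).mono (ℱ.mono (Finset.mem_range.mp hi))).measurable).pow_const 2
    have h3 : Measurable[ℱ m] fun ω =>
        ∑ i ∈ Finset.range m, (μ[fun ω' => (d (i + 1) ω') ^ 2|ℱ i]) ω :=
      Finset.measurable_sum _ fun i hi =>
        (stronglyMeasurable_condExp.mono (ℱ.mono (Finset.mem_range.mp hi).le)).measurable
    exact (((h1.const_mul lam).sub ((h2.add h3).const_mul (lam ^ 2 / 2))).exp).stronglyMeasurable
  have hZnonneg : ∀ m ω, 0 ≤ Z m ω := fun m ω => (Real.exp_pos _).le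
  -- a.e. bound on Z m
  have hZbd : ∀ m, ∀ᵐ ω ∂μ, Z m ω ≤ Real.exp (m * (1 / 2)) := by
    intro m
    have hc : ∀ᵐ ω ∂μ, ∀ i ∈ Finset.range m,
        0 ≤ (μ[fun ω' => (d (i + 1) ω') ^ 2|ℱ i]) ω := by
      rw [Filter.eventually_all_finset]
      intro i _
      exact condExp_nonneg (Filter.Eventually.of_forall fun ω => sq_nonneg _)
    filter_upwards [hc] with ω hcω
    show selfNormZ μ ℱ d lam m ω ≤ _
    unfold selfNormZ
    apply Real.exp_le_exp.mpr
    have h1 : lam * ∑ i ∈ Finset.range m, d (i + 1) ω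
        - lam ^ 2 / 2 * (∑ i ∈ Finset.range m, (d (i + 1) ω) ^ 2)
        ≤ m * (1 / 2) := by
      rw [Finset.mul_sum, Finset.mul_sum, ← Finset.sum_sub_distrib]
      calc (∑ i ∈ Finset.range m,
            (lam * d (i + 1) ω - lam ^ 2 / 2 * (d (i + 1) ω) ^ 2))
          ≤ ∑ _i ∈ Finset.range m, (1 / 2 : ℝ) := by
            apply Finset.sum_le_sum
            intro i _
            have := sub_sq_le_half (lam * d (i + 1) ω)
            nlinarith [sq_nonneg (lam * d (i + 1) ω)]
        _ = m * (1 / 2) := by simp [Finset.sum_const, mul_comm]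
    have h2 : 0 ≤ lam ^ 2 / 2 * ∑ i ∈ Finset.range m,
        (μ[fun ω' => (d (i + 1) ω') ^ 2|ℱ i]) ω := by
      apply mul_nonneg (by positivity)
      exact Finset.sum_nonneg hcω
    have h3 : lam ^ 2 / 2 * ((∑ i ∈ Finset.range m, (d (i + 1) ω) ^ 2)
        + ∑ i ∈ Finset.range m, (μ[fun ω' => (d (i + 1) ω') ^ 2|ℱ i]) ω)
        = lam ^ 2 / 2 * (∑ i ∈ Finset.range m, (d (i + 1) ω) ^ 2)
          + lam ^ 2 / 2 * ∑ i ∈ Finset.range m,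
              (μ[fun ω' => (d (i + 1) ω') ^ 2|ℱ i]) ω := by ring
    linarith
  have hZint : ∀ m, Integrable (Z m) μ := by
    intro m
    refine Integrable.mono' (integrable_const (Real.exp (m * (1 / 2)))) ?_ ?_
    · exact ((hZmeas m).mono (ℱ.le m)).aestronglyMeasurable
    · filter_upwards [hZbd m] with ω hω
      rwa [Real.norm_of_nonneg (hZnonneg m ω)]
  -- main induction
  have main : ∀ m, ∫ ω, Z m ω ∂μ ≤ 1 := by
    intro m
    induction m with
    | zero =>
      simp [hZ, selfNormZ]
    | succ k ih =>
      set c : Ω → ℝ := μ[fun ω' => (d (k + 1) ω') ^ 2|ℱ k] with hc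
      set X : Ω → ℝ := fun ω =>
        Real.exp (lam * d (k + 1) ω - lam ^ 2 / 2 * (d (k + 1) ω) ^ 2) with hX
      set g : Ω → ℝ := fun ω => Z k ω * Real.exp (-(lam ^ 2 / 2) * c ω) with hg
      have hsplit : ∀ ω, Z (k + 1) ω = g ω * X ω := by
        intro ω
        rw [hg, hX, hZ, hc]
        simp only [selfNormZ, Finset.sum_range_succ]
        rw [← Real.exp_add, ← Real.exp_add]
        congr 1
        ring
      -- measurability facts
      have hgm : StronglyMeasurable[ℱ k] g :=
        ((hZmeas k).measurable.mul
          ((stronglyMeasurable_condExp.measurable.const_mul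
            (-(lam ^ 2 / 2))).exp)).stronglyMeasurable
      have hXm : AEStronglyMeasurable X μ := by
        have hd : Measurable (d (k + 1)) := ((hadp (k + 1)).mono (ℱ.le (k + 1))).measurable
        exact (((hd.const_mul lam).sub
          ((hd.pow_const 2).const_mul (lam ^ 2 / 2))).exp).aestronglyMeasurable
      have hXbd : ∀ ω, X ω ≤ Real.exp (1 / 2) := by
        intro ω
        apply Real.exp_le_exp.mpr
        have := sub_sq_le_half (lam * d (k + 1) ω)
        nlinarith
      have hXnonneg : ∀ ω, 0 ≤ X ω := fun ω => (Real.exp_pos _).le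
      have hXint : Integrable X μ := by
        refine Integrable.mono' (integrable_const (Real.exp (1 / 2))) hXm ?_
        exact Filter.Eventually.of_forall fun ω => by
          rw [Real.norm_of_nonneg (hXnonneg ω)]; exact hXbd ω
      have hgnonneg : ∀ ω, 0 ≤ g ω :=
        fun ω => mul_nonneg (hZnonneg k ω) (Real.exp_pos _).le
      have hcnn : ∀ᵐ ω ∂μ, 0 ≤ c ω :=
        condExp_nonneg (Filter.Eventually.of_forall fun ω => sq_nonneg _)
      have hgbd : ∀ᵐ ω ∂μ, ‖g ω‖ ≤ Real.exp (k * (1 / 2)) := by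
        filter_upwards [hZbd k, hcnn] with ω h1 h2
        rw [Real.norm_of_nonneg (hgnonneg ω), hg]
        calc Z k ω * Real.exp (-(lam ^ 2 / 2) * c ω) ≤ Z k ω * 1 := by
              apply mul_le_mul_of_nonneg_left _ (hZnonneg k ω)
              rw [← Real.exp_zero]
              apply Real.exp_le_exp.mpr
              nlinarith
          _ = Z k ω := mul_one _
          _ ≤ _ := h1
      have hgXint : Integrable (fun ω => g ω * X ω) μ :=
        hXint.bdd_mul (((hgm.mono (ℱ.le k))).aestronglyMeasurable) hgbd
      -- the conditional expectation bound
      have hd2int : Integrable (fun ω => (d (k + 1) ω) ^ 2) μ := hint (k + 1)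
      have hdint : Integrable (d (k + 1)) μ := by
        refine Integrable.mono' ((integrable_const 1).add hd2int)
          ((hadp (k + 1)).mono (ℱ.le (k + 1))).aestronglyMeasurable ?_
        refine Filter.Eventually.of_forall fun ω => ?_
        simp only [Pi.add_apply, Real.norm_eq_abs]
        nlinarith [sq_nonneg (|d (k + 1) ω| - 1), abs_nonneg (d (k + 1) ω),
          sq_abs (d (k + 1) ω)]
      have hRHSint : Integrable
          (fun ω => 1 + lam * d (k + 1) ω + lam ^ 2 / 2 * (d (k + 1) ω) ^ 2) μ :=
        ((integrable_const 1).add (hdint.const_mul lam)).add (hd2int.const_mul _)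
      have hXle : ∀ ω, X ω ≤ 1 + lam * d (k + 1) ω + lam ^ 2 / 2 * (d (k + 1) ω) ^ 2 := by
        intro ω
        have := exp_sub_sq_le (lam * d (k + 1) ω)
        rw [hX]
        calc Real.exp (lam * d (k + 1) ω - lam ^ 2 / 2 * (d (k + 1) ω) ^ 2)
            = Real.exp (lam * d (k + 1) ω - (lam * d (k + 1) ω) ^ 2 / 2) := by ring_nf
          _ ≤ 1 + lam * d (k + 1) ω + (lam * d (k + 1) ω) ^ 2 / 2 := this
          _ = 1 + lam * d (k + 1) ω + lam ^ 2 / 2 * (d (k + 1) ω) ^ 2 := by ring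
      have hcondX : μ[X|ℱ k] ≤ᵐ[μ] fun ω => 1 + lam ^ 2 / 2 * c ω := by
        have h1 : μ[X|ℱ k] ≤ᵐ[μ]
            μ[fun ω => 1 + lam * d (k + 1) ω + lam ^ 2 / 2 * (d (k + 1) ω) ^ 2|ℱ k] :=
          condExp_mono hXint hRHSint (Filter.Eventually.of_forall hXle)
        have h2 : μ[fun ω => 1 + lam * d (k + 1) ω + lam ^ 2 / 2 * (d (k + 1) ω) ^ 2|ℱ k]
            =ᵐ[μ] fun ω => 1 + lam ^ 2 / 2 * c ω := by
          have e1 : (fun ω => 1 + lam * d (k + 1) ω + lam ^ 2 / 2 * (d (k + 1) ω) ^ 2)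
              = (fun _ => (1 : ℝ)) + (lam • d (k + 1)
                + (lam ^ 2 / 2) • (fun ω => (d (k + 1) ω) ^ 2)) := by
            funext ω
            simp only [Pi.add_apply, Pi.smul_apply, smul_eq_mul]
            ring
          rw [e1]
          refine (condExp_add (m := ℱ k) (μ := μ) (integrable_const 1)
            ((hdint.smul lam).add (hd2int.smul (lam ^ 2 / 2)))).trans ?_
          have h3 := condExp_add (m := ℱ k) (μ := μ) (hdint.smul lam) (hd2int.smul (lam ^ 2 / 2))
          have h4 := condExp_smul (μ := μ) (m := ℱ k) lam (d (k + 1))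
          have h5 := condExp_smul (μ := μ) (m := ℱ k) (lam ^ 2 / 2)
            (fun ω => (d (k + 1) ω) ^ 2)
          filter_upwards [h3, h4, h5, hmdf k] with ω e3 e4 e5 e6
          simp only [Pi.add_apply] at *
          rw [condExp_const (ℱ.le k) (1 : ℝ)]
          simp only [Pi.add_apply, e3, e4, e5, Pi.smul_apply, smul_eq_mul, e6,
            Pi.zero_apply, mul_zero, hc]
          ring
        exact h1.trans h2.le
      have hcondXnn : (0 : Ω → ℝ) ≤ᵐ[μ] μ[X|ℱ k] :=
        condExp_nonneg (Filter.Eventually.of_forall hXnonneg)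
      -- pull-out and tower
      have hpull : μ[fun ω => g ω * X ω|ℱ k] =ᵐ[μ] fun ω => g ω * (μ[X|ℱ k]) ω := by
        have := condExp_mul_of_stronglyMeasurable_left hgm hgXint hXint
        exact this
      have hint1 : ∫ ω, Z (k + 1) ω ∂μ = ∫ ω, g ω * (μ[X|ℱ k]) ω ∂μ := by
        rw [show (fun ω => Z (k + 1) ω) = fun ω => g ω * X ω from funext hsplit]
        rw [← integral_condExp (f := fun ω => g ω * X ω) (ℱ.le k)]
        exact integral_congr_ae hpull
      have hfinal : (fun ω => g ω * (μ[X|ℱ k]) ω) ≤ᵐ[μ] Z k := by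
        filter_upwards [hcondX, hcondXnn] with ω h1 h2
        calc g ω * (μ[X|ℱ k]) ω ≤ g ω * (1 + lam ^ 2 / 2 * c ω) :=
              mul_le_mul_of_nonneg_left h1 (hgnonneg ω)
          _ ≤ g ω * Real.exp (lam ^ 2 / 2 * c ω) := by
              apply mul_le_mul_of_nonneg_left _ (hgnonneg ω)
              have := Real.add_one_le_exp (lam ^ 2 / 2 * c ω)
              linarith
          _ = Z k ω := by
              rw [hg, mul_assoc, ← Real.exp_add]
              simp
      have hgcXint : Integrable (fun ω => g ω * (μ[X|ℱ k]) ω) μ :=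
        integrable_condExp.bdd_mul (((hgm.mono (ℱ.le k))).aestronglyMeasurable) hgbd
      calc ∫ ω, Z (k + 1) ω ∂μ = ∫ ω, g ω * (μ[X|ℱ k]) ω ∂μ := hint1
        _ ≤ ∫ ω, Z k ω ∂μ := integral_mono_ae hgcXint (hZint k) hfinal
        _ ≤ 1 := ih
  -- conclude
  have heq : (∫⁻ ω, ENNReal.ofReal (Z n ω) ∂μ) = ENNReal.ofReal (∫ ω, Z n ω ∂μ) :=
    (ofReal_integral_eq_lintegral_ofReal (hZint n)
      (Filter.Eventually.of_forall (hZnonneg n))).symm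
  calc (∫⁻ ω, ENNReal.ofReal (Real.exp (lam * ∑ i ∈ Finset.range n, d (i + 1) ω
        - lam ^ 2 / 2 * ((∑ i ∈ Finset.range n, (d (i + 1) ω) ^ 2)
          + ∑ i ∈ Finset.range n, (μ[fun ω' => (d (i + 1) ω') ^ 2|ℱ i]) ω))) ∂μ)
      = ∫⁻ ω, ENNReal.ofReal (Z n ω) ∂μ := rfl
    _ = ENNReal.ofReal (∫ ω, Z n ω ∂μ) := heq
    _ ≤ ENNReal.ofReal 1 := ENNReal.ofReal_le_ofReal (main n)
    _ = 1 := ENNReal.ofReal_one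
end

section
/- Let A and B ≥ 0 be random variables satisfying E[exp(λ A − (λ²/2) B²)] ≤ 1 for all λ ∈ ℝ. Then for every y > 0, E[ (y / sqrt(B² + y²)) · exp( A² / (2(B² + y²)) ) ] ≤ 1. -/
open MeasureTheory Real

lemma gauss_integrable (a : ℝ) {c : ℝ} (hc : 0 < c) :
    Integrable (fun x : ℝ => Real.exp (a * x - c / 2 * x ^ 2)) := by
  have h : ∀ x : ℝ, a * x - c / 2 * x ^ 2 =
      -(c / 2) * (x - a / c) ^ 2 + a ^ 2 / (2 * c) := by
    intro x; field_simp; ring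
  simp_rw [h, Real.exp_add]
  exact ((integrable_exp_neg_mul_sq (half_pos hc)).comp_sub_right (a / c)).mul_const _

lemma gauss_int (a : ℝ) {c : ℝ} (hc : 0 < c) :
    ∫ x : ℝ, Real.exp (a * x - c / 2 * x ^ 2)
      = Real.sqrt (2 * π / c) * Real.exp (a ^ 2 / (2 * c)) := by
  have h : ∀ x : ℝ, a * x - c / 2 * x ^ 2 =
      -(c / 2) * (x - a / c) ^ 2 + a ^ 2 / (2 * c) := by
    intro x; field_simp; ring
  simp_rw [h, Real.exp_add]
  rw [integral_mul_const, integral_sub_right_eq_self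
    (fun x : ℝ => Real.exp (-(c / 2) * x ^ 2)) (a / c), integral_gaussian]
  congr 2
  rw [div_div_eq_mul_div]
  ring

/-- De la Peña's pseudo-maximization bound: if `E[exp(λA − (λ²/2)B²)] ≤ 1` for all
`λ ∈ ℝ`, then for every `y > 0`,
`E[(y/√(B²+y²)) exp(A²/(2(B²+y²)))] ≤ 1`. -/
theorem stmt9 {Ω : Type*} [MeasurableSpace Ω] (P : Measure Ω) [IsProbabilityMeasure P]
    (A B : Ω → ℝ) (hA : Measurable A) (hB : Measurable B)
    (hBnn : ∀ᵐ ω ∂P, 0 ≤ B ω)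
    (hyp : ∀ lam : ℝ,
      (∫⁻ ω, ENNReal.ofReal (Real.exp (lam * A ω - lam ^ 2 / 2 * (B ω) ^ 2)) ∂P) ≤ 1) :
    ∀ y : ℝ, 0 < y →
      (∫⁻ ω, ENNReal.ofReal (y / Real.sqrt ((B ω) ^ 2 + y ^ 2) *
        Real.exp ((A ω) ^ 2 / (2 * ((B ω) ^ 2 + y ^ 2)))) ∂P) ≤ 1 := by
  intro y hy
  -- Gaussian weight
  set g : ℝ → ℝ := fun x => y / Real.sqrt (2 * π) * Real.exp (- (y ^ 2 / 2) * x ^ 2) with hg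
  have hgnn : ∀ x, 0 ≤ g x := fun x =>
    mul_nonneg (div_nonneg hy.le (Real.sqrt_nonneg _)) (Real.exp_pos _).le
  -- pointwise identity
  have key : ∀ a b : ℝ,
      ENNReal.ofReal (y / Real.sqrt (b ^ 2 + y ^ 2) *
        Real.exp (a ^ 2 / (2 * (b ^ 2 + y ^ 2)))) =
      ∫⁻ x : ℝ, ENNReal.ofReal (g x * Real.exp (x * a - x ^ 2 / 2 * b ^ 2)) := by
    intro a b
    have hc : (0:ℝ) < b ^ 2 + y ^ 2 := by positivity
    have hfeq : ∀ x : ℝ, g x * Real.exp (x * a - x ^ 2 / 2 * b ^ 2) =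
        y / Real.sqrt (2 * π) * Real.exp (a * x - (b ^ 2 + y ^ 2) / 2 * x ^ 2) := by
      intro x
      rw [hg, mul_assoc, ← Real.exp_add]
      congr 2
      ring
    have hint : Integrable (fun x : ℝ => g x * Real.exp (x * a - x ^ 2 / 2 * b ^ 2)) := by
      simp_rw [hfeq]
      exact (gauss_integrable a hc).const_mul _
    rw [← ofReal_integral_eq_lintegral_ofReal hint
      (Filter.Eventually.of_forall fun x =>
        mul_nonneg (hgnn x) (Real.exp_pos _).le)]
    congr 1
    simp_rw [hfeq]
    rw [integral_const_mul, gauss_int a hc]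
    have h2π : (0:ℝ) < 2 * π := by positivity
    have hsqrt : Real.sqrt (2 * π / (b ^ 2 + y ^ 2)) =
        Real.sqrt (2 * π) / Real.sqrt (b ^ 2 + y ^ 2) := Real.sqrt_div' _ hc.le ▸ by
      rw [Real.sqrt_div h2π.le]
    rw [hsqrt]
    have hs : Real.sqrt (2 * π) ≠ 0 := by positivity
    field_simp
  -- rewrite LHS using key (a.e.)
  have step1 : (∫⁻ ω, ENNReal.ofReal (y / Real.sqrt ((B ω) ^ 2 + y ^ 2) *
        Real.exp ((A ω) ^ 2 / (2 * ((B ω) ^ 2 + y ^ 2)))) ∂P)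
      = ∫⁻ ω, (∫⁻ x : ℝ, ENNReal.ofReal
          (g x * Real.exp (x * A ω - x ^ 2 / 2 * (B ω) ^ 2))) ∂P :=
    lintegral_congr fun ω => key (A ω) (B ω)
  rw [step1]
  -- Tonelli swap
  have hmeas : Measurable (Function.uncurry fun (ω : Ω) (x : ℝ) =>
      ENNReal.ofReal (g x * Real.exp (x * A ω - x ^ 2 / 2 * (B ω) ^ 2))) := by
    have hgmeas : Measurable g := by
      rw [hg]
      exact measurable_const.mul (((measurable_id.pow_const 2).const_mul (-(y^2/2))).exp)
    refine ENNReal.measurable_ofReal.comp (Measurable.mul ?_ ?_)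
    · exact hgmeas.comp measurable_snd
    · exact ((measurable_snd.mul (hA.comp measurable_fst)).sub
        (((measurable_snd.pow_const 2).div_const 2).mul
          ((hB.comp measurable_fst).pow_const 2))).exp
  rw [lintegral_lintegral_swap hmeas.aemeasurable]
  -- bound inner integral using hyp
  have step2 : ∀ x : ℝ,
      (∫⁻ ω, ENNReal.ofReal (g x * Real.exp (x * A ω - x ^ 2 / 2 * (B ω) ^ 2)) ∂P)
        ≤ ENNReal.ofReal (g x) := by
    intro x
    calc (∫⁻ ω, ENNReal.ofReal (g x * Real.exp (x * A ω - x ^ 2 / 2 * (B ω) ^ 2)) ∂P)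
        = ENNReal.ofReal (g x) *
          ∫⁻ ω, ENNReal.ofReal (Real.exp (x * A ω - x ^ 2 / 2 * (B ω) ^ 2)) ∂P := by
          simp_rw [ENNReal.ofReal_mul (hgnn x)]
          exact lintegral_const_mul _ (ENNReal.measurable_ofReal.comp
            (((measurable_const.mul hA).sub
              ((measurable_const.mul (hB.pow_const 2)))).exp))
      _ ≤ ENNReal.ofReal (g x) * 1 := mul_le_mul_right (hyp x) _
      _ = ENNReal.ofReal (g x) := mul_one _
  calc (∫⁻ x : ℝ, ∫⁻ ω, ENNReal.ofReal
          (g x * Real.exp (x * A ω - x ^ 2 / 2 * (B ω) ^ 2)) ∂P)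
      ≤ ∫⁻ x : ℝ, ENNReal.ofReal (g x) := lintegral_mono step2
    _ = 1 := by
        have hgint : Integrable g := (integrable_exp_neg_mul_sq
          (by positivity : (0:ℝ) < y ^ 2 / 2)).const_mul _
        rw [← ofReal_integral_eq_lintegral_ofReal hgint
          (Filter.Eventually.of_forall hgnn)]
        have : ∫ x : ℝ, g x = 1 := by
          rw [hg]
          simp only
          rw [integral_const_mul, integral_gaussian]
          rw [Real.sqrt_div (by positivity : (0:ℝ) ≤ π)]
          have : Real.sqrt (y ^ 2 / 2) = y / Real.sqrt 2 := by
            rw [Real.sqrt_div (by positivity), Real.sqrt_sq hy.le]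
          rw [this]
          have hπ : Real.sqrt π ≠ 0 := by positivity
          have h2 : Real.sqrt 2 ≠ 0 := by positivity
          have hsq : Real.sqrt (2 * π) = Real.sqrt 2 * Real.sqrt π :=
            Real.sqrt_mul (by norm_num) _
          rw [hsq]
          field_simp
        rw [this, ENNReal.ofReal_one]
end

section
/- Let ξ₁,…,ξ_N be random variables and J a random index in {1,…,N}, all on a common probability space. Suppose E[ max_{1≤j≤N} w_j exp(2 ξ_j²) ] ≤ N where w_j := sqrt(E[B_j²]) / sqrt(B_j² + E[B_j²]) and E[ 1/w_J ] ≤ sqrt(2). Then E[ ξ_J² ] ≤ (1/2) log N + (1/4) log 2. -/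
open MeasureTheory
open scoped ENNReal

/-- Pseudo-maximization over a random index: if
`E[max_j w_j exp(2ξ_j²)] ≤ N` and `E[1/w_J] ≤ √2`, where
`w_j = √(E[B_j²])/√(B_j² + E[B_j²])`, then `E[ξ_J²] ≤ (1/2) log N + (1/4) log 2`. -/
theorem stmt16 {Ω : Type*} [MeasurableSpace Ω] (P : Measure Ω) [IsProbabilityMeasure P]
    (N : ℕ) (hN : 0 < N)
    (ξ B : Fin N → Ω → ℝ) (hξ : ∀ j, Measurable (ξ j)) (hB : ∀ j, Measurable (B j))
    (hBnn : ∀ j ω, 0 ≤ B j ω)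
    (hBint : ∀ j, Integrable (fun ω => (B j ω) ^ 2) P)
    (hBpos : ∀ j, 0 < ∫ ω, (B j ω) ^ 2 ∂P)
    (J : Ω → Fin N) (hJ : Measurable J)
    (w : Fin N → Ω → ℝ)
    (hw : ∀ j ω, w j ω = Real.sqrt (∫ ω', (B j ω') ^ 2 ∂P) /
        Real.sqrt ((B j ω) ^ 2 + ∫ ω', (B j ω') ^ 2 ∂P))
    (hmax : (∫⁻ ω, ENNReal.ofReal (Finset.univ.sup' ⟨⟨0, hN⟩, Finset.mem_univ _⟩
        (fun j => w j ω * Real.exp (2 * (ξ j ω) ^ 2))) ∂P) ≤ N)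
    (hinv : (∫⁻ ω, ENNReal.ofReal (1 / w (J ω) ω) ∂P) ≤ ENNReal.ofReal (Real.sqrt 2)) :
    (∫ ω, (ξ (J ω) ω) ^ 2 ∂P) ≤ 1 / 2 * Real.log N + 1 / 4 * Real.log 2 := by
  -- positivity of the weights
  have hwpos : ∀ j ω, 0 < w j ω := by
    intro j ω
    rw [hw]
    apply div_pos (Real.sqrt_pos.2 (hBpos j))
    apply Real.sqrt_pos.2
    have := hBpos j
    nlinarith [sq_nonneg (B j ω)]
  -- measurability of selected functions
  have hmeas : ∀ (f : Fin N → Ω → ℝ), (∀ j, Measurable (f j)) →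
      Measurable (fun ω => f (J ω) ω) := by
    intro f hf
    have : (fun ω => f (J ω) ω) =
        fun ω => ∑ j : Fin N, if J ω = j then f j ω else 0 := by
      funext ω
      simp [Finset.sum_ite_eq]
    rw [this]
    apply Finset.measurable_sum
    intro j _
    exact Measurable.ite (hJ (measurableSet_singleton j)) (hf j) measurable_const
  have hwmeas : ∀ j, Measurable (w j) := by
    intro j
    have : w j = fun ω => Real.sqrt (∫ ω', (B j ω') ^ 2 ∂P) /
        Real.sqrt ((B j ω) ^ 2 + ∫ ω', (B j ω') ^ 2 ∂P) := funext fun ω => hw j ω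
    rw [this]
    exact measurable_const.div (((hB j).pow_const 2).add_const _).sqrt
  have hξJ : Measurable (fun ω => ξ (J ω) ω) := hmeas ξ hξ
  have hwJ : Measurable (fun ω => w (J ω) ω) := hmeas w hwmeas
  -- Cauchy-Schwarz setup
  set F : Ω → ENNReal := fun ω =>
    ENNReal.ofReal (Real.sqrt (w (J ω) ω * Real.exp (2 * (ξ (J ω) ω) ^ 2))) with hF
  set G : Ω → ENNReal := fun ω => ENNReal.ofReal (Real.sqrt (1 / w (J ω) ω)) with hG
  have hFmeas : Measurable F :=
    (hwJ.mul ((((hξJ.pow_const 2).const_mul 2).exp))).sqrt.ennreal_ofReal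
  have hGmeas : Measurable G := (hwJ.const_div 1).sqrt.ennreal_ofReal
  have hFG : ∀ ω, F ω * G ω = ENNReal.ofReal (Real.exp ((ξ (J ω) ω) ^ 2)) := by
    intro ω
    have hwp := hwpos (J ω) ω
    rw [hF, hG]
    rw [← ENNReal.ofReal_mul (Real.sqrt_nonneg _), ← Real.sqrt_mul (by positivity)]
    congr 1
    rw [mul_one_div, mul_div_assoc, mul_comm, div_mul_cancel₀ _ (ne_of_gt hwp)]
    rw [show (2 : ℝ) * (ξ (J ω) ω) ^ 2 = (ξ (J ω) ω) ^ 2 + (ξ (J ω) ω) ^ 2 by ring,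
      Real.exp_add, Real.sqrt_mul_self (Real.exp_nonneg _)]
  have hFsq : ∀ ω, F ω ^ (2:ℝ) = ENNReal.ofReal (w (J ω) ω * Real.exp (2 * (ξ (J ω) ω) ^ 2)) := by
    intro ω
    rw [hF, ENNReal.ofReal_rpow_of_nonneg (Real.sqrt_nonneg _) (by norm_num)]
    congr 1
    rw [Real.rpow_two, Real.sq_sqrt (mul_nonneg (hwpos _ _).le (Real.exp_nonneg _))]
  have hGsq : ∀ ω, G ω ^ (2:ℝ) = ENNReal.ofReal (1 / w (J ω) ω) := by
    intro ω
    rw [hG, ENNReal.ofReal_rpow_of_nonneg (Real.sqrt_nonneg _) (by norm_num)]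
    congr 1
    rw [Real.rpow_two, Real.sq_sqrt (one_div_nonneg.2 (hwpos _ _).le)]
  have hconj : Real.HolderConjugate 2 2 := Real.HolderConjugate.two_two
  have hCS := ENNReal.lintegral_mul_le_Lp_mul_Lq P hconj hFmeas.aemeasurable hGmeas.aemeasurable
  -- bound ∫ F^2
  have hF2 : (∫⁻ ω, F ω ^ (2:ℝ) ∂P) ≤ N := by
    refine le_trans ?_ hmax
    apply lintegral_mono
    intro ω
    dsimp only
    rw [hFsq]
    apply ENNReal.ofReal_le_ofReal
    exact Finset.le_sup' (fun j => w j ω * Real.exp (2 * (ξ j ω) ^ 2)) (Finset.mem_univ (J ω))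
  have hG2 : (∫⁻ ω, G ω ^ (2:ℝ) ∂P) ≤ ENNReal.ofReal (Real.sqrt 2) := by
    refine le_trans (le_of_eq ?_) hinv
    exact lintegral_congr fun ω => hGsq ω
  -- main lintegral bound
  have hbound : (∫⁻ ω, ENNReal.ofReal (Real.exp ((ξ (J ω) ω) ^ 2)) ∂P) ≤
      (N : ℝ≥0∞) ^ (1/2 : ℝ) * (ENNReal.ofReal (Real.sqrt 2)) ^ (1/2 : ℝ) := by
    calc (∫⁻ ω, ENNReal.ofReal (Real.exp ((ξ (J ω) ω) ^ 2)) ∂P)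
        = ∫⁻ ω, F ω * G ω ∂P := (lintegral_congr fun ω => (hFG ω).symm)
      _ ≤ (∫⁻ ω, F ω ^ (2:ℝ) ∂P) ^ (1/2:ℝ) * (∫⁻ ω, G ω ^ (2:ℝ) ∂P) ^ (1/2:ℝ) := hCS
      _ ≤ (N : ℝ≥0∞) ^ (1/2 : ℝ) * (ENNReal.ofReal (Real.sqrt 2)) ^ (1/2 : ℝ) := by
          gcongr
  set C : ℝ := Real.sqrt N * Real.sqrt (Real.sqrt 2) with hC
  have hCval : (N : ℝ≥0∞) ^ (1/2 : ℝ) * (ENNReal.ofReal (Real.sqrt 2)) ^ (1/2 : ℝ) =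
      ENNReal.ofReal C := by
    rw [hC, ENNReal.ofReal_mul (Real.sqrt_nonneg _)]
    congr 1
    · rw [← ENNReal.ofReal_natCast N,
        ENNReal.ofReal_rpow_of_nonneg (Nat.cast_nonneg N) (by norm_num)]
      congr 1
      rw [← Real.sqrt_eq_rpow]
    · rw [ENNReal.ofReal_rpow_of_nonneg (Real.sqrt_nonneg _) (by norm_num)]
      congr 1
      rw [← Real.sqrt_eq_rpow]
  rw [hCval] at hbound
  -- integrability of exp(ξ_J²)
  have hexpmeas : Measurable (fun ω => Real.exp ((ξ (J ω) ω) ^ 2)) := (hξJ.pow_const 2).exp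
  have hexpint : Integrable (fun ω => Real.exp ((ξ (J ω) ω) ^ 2)) P := by
    refine ⟨hexpmeas.aestronglyMeasurable, ?_⟩
    rw [hasFiniteIntegral_iff_norm]
    have : (∫⁻ ω, ENNReal.ofReal ‖Real.exp ((ξ (J ω) ω) ^ 2)‖ ∂P) =
        ∫⁻ ω, ENNReal.ofReal (Real.exp ((ξ (J ω) ω) ^ 2)) ∂P := by
      apply lintegral_congr
      intro ω
      rw [Real.norm_eq_abs, abs_of_nonneg (Real.exp_nonneg _)]
    rw [this]
    exact lt_of_le_of_lt hbound ENNReal.ofReal_lt_top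
  -- integrability of ξ_J²
  have hsqint : Integrable (fun ω => (ξ (J ω) ω) ^ 2) P := by
    apply Integrable.mono' hexpint (hξJ.pow_const 2).aestronglyMeasurable
    filter_upwards with ω
    rw [Real.norm_eq_abs, abs_of_nonneg (sq_nonneg _)]
    calc (ξ (J ω) ω) ^ 2 ≤ (ξ (J ω) ω) ^ 2 + 1 := by linarith
      _ ≤ Real.exp ((ξ (J ω) ω) ^ 2) := by
          linarith [Real.add_one_le_exp ((ξ (J ω) ω) ^ 2)]
  -- ∫ exp(ξ_J²) ≤ C
  have hAle : (∫ ω, Real.exp ((ξ (J ω) ω) ^ 2) ∂P) ≤ C := by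
    have h0 : 0 ≤ C := by positivity
    rw [integral_eq_lintegral_of_nonneg_ae
      (Filter.Eventually.of_forall fun ω => Real.exp_nonneg _)
      hexpmeas.aestronglyMeasurable]
    calc (∫⁻ ω, ENNReal.ofReal (Real.exp ((ξ (J ω) ω) ^ 2)) ∂P).toReal
        ≤ (ENNReal.ofReal C).toReal := ENNReal.toReal_mono ENNReal.ofReal_ne_top hbound
      _ = C := ENNReal.toReal_ofReal h0
  -- Jensen via linearization: exp m ≤ ∫ exp(ξ_J²)
  set m : ℝ := ∫ ω, (ξ (J ω) ω) ^ 2 ∂P with hm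
  have hJensen : Real.exp m ≤ ∫ ω, Real.exp ((ξ (J ω) ω) ^ 2) ∂P := by
    have hle : ∀ ω, Real.exp m * ((ξ (J ω) ω) ^ 2 - m + 1) ≤ Real.exp ((ξ (J ω) ω) ^ 2) := by
      intro ω
      have h1 : (ξ (J ω) ω) ^ 2 - m + 1 ≤ Real.exp ((ξ (J ω) ω) ^ 2 - m) :=
        Real.add_one_le_exp _
      calc Real.exp m * ((ξ (J ω) ω) ^ 2 - m + 1)
          ≤ Real.exp m * Real.exp ((ξ (J ω) ω) ^ 2 - m) := by
            exact mul_le_mul_of_nonneg_left h1 (Real.exp_nonneg m)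
        _ = Real.exp ((ξ (J ω) ω) ^ 2) := by rw [← Real.exp_add]; ring_nf
    have hint1 : Integrable (fun ω => Real.exp m * ((ξ (J ω) ω) ^ 2 - m + 1)) P := by
      apply Integrable.const_mul
      exact (hsqint.sub (integrable_const m)).add (integrable_const 1)
    have := integral_mono hint1 hexpint hle
    calc Real.exp m = ∫ ω, Real.exp m * ((ξ (J ω) ω) ^ 2 - m + 1) ∂P := by
          rw [integral_const_mul]
          have : (∫ ω, ((ξ (J ω) ω) ^ 2 - m + 1) ∂P) = 1 := by
            have e1 : (fun ω => (ξ (J ω) ω) ^ 2 - m + 1) =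
                fun ω => (ξ (J ω) ω) ^ 2 + (1 - m) := by funext ω; ring
            rw [show (∫ ω, ((ξ (J ω) ω) ^ 2 - m + 1) ∂P) =
              ∫ ω, ((ξ (J ω) ω) ^ 2 + (1 - m)) ∂P from by rw [e1],
              integral_add hsqint (integrable_const _), integral_const, probReal_univ]
            simp [← hm]
          rw [this, mul_one]
      _ ≤ _ := this
  -- conclude
  have hexpC : Real.exp m ≤ C := le_trans hJensen hAle
  have hCpos : 0 < C := by
    rw [hC]
    have : (0:ℝ) < N := by exact_mod_cast hN
    positivity
  have : m ≤ Real.log C :=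
    (Real.le_log_iff_exp_le hCpos).2 hexpC
  refine le_trans this (le_of_eq ?_)
  rw [hC, Real.log_mul (by positivity) (by positivity)]
  have hNpos : (0:ℝ) < N := by exact_mod_cast hN
  rw [Real.log_sqrt hNpos.le, Real.log_sqrt (Real.sqrt_nonneg 2),
    Real.log_sqrt (by norm_num : (0:ℝ) ≤ 2)]
  ring
end
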